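/- If the solution set X* of A x − B|x| = b is nonempty and x = 0 is the only solution of A x − B|x| = 0, then there is κ > 0 such that κ·dist(x, X*) ≤ ‖A x − B|x| − b‖₂ for all x ∈ R^n. -/

import Mathlib

open Matrix

/-- The `i`-th largest singular value of a real matrix (0-indexed),
defined as the `i`-th entry of the decreasingly sorted list of square roots
of the eigenvalues of `Aᴴ * A`; `0` if `i` is out of range. -/
noncomputable def sv {m n : ℕ} (A : Matrix (Fin m) (Fin n) ℝ) (i : ℕ) : ℝ :=
  ((List.ofFn fun j : Fin n =>
      Real.sqrt (((by simpa using Matrix.isHermitian_conjTranspose_mul_self A : (Aᵀ * A).IsHermitian)).eigenvalues j)).insertionSort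
    (· ≥ ·)).getD i 0

/-- Euclidean norm of a vector. -/
noncomputable def vnorm {n : ℕ} (x : Fin n → ℝ) : ℝ := Real.sqrt (∑ i, x i ^ 2)

/-!
Near a solution `z`, the map `x ↦ A x − B|x|` is `b` plus a map of the same shape in the
displacement `x − z`, in which absolute values are taken only on the coordinates where `z`
vanishes (the other coordinates keep their sign). Positively homogeneous maps
`x ↦ M x − B|x|_S` therefore satisfy a global error bound, by induction on `S`: on the compact
set of unit vectors orthogonal to the directions of constancy, every zero has a nonzero
coordinate in `S`, so the induction hypothesis gives a local bound there; compactness glues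
these, and homogeneity spreads the bound to all of space. For the system itself, uniqueness of
the homogeneous solution makes the residual grow linearly, which settles points far from the
origin, and on a ball the local bounds at the solutions are again glued by compactness.
-/

open Metric Filter Topology Pointwise

theorem IsCompact.exists_pos_mul_le_of_eventually {X : Type*} [TopologicalSpace X] {K : Set X}
    (hK : IsCompact K) {f d : X → ℝ} (hf : Continuous f) (hd : Continuous d) (hd0 : ∀ x, 0 ≤ d x)
    (hloc : ∀ x ∈ K, f x ≤ 0 → ∃ κ > 0, ∀ᶠ y in 𝓝 x, κ * d y ≤ f y) :
    ∃ κ > 0, ∀ x ∈ K, κ * d x ≤ f x := by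
  refine hK.induction_on (p := fun s => ∃ κ > 0, ∀ x ∈ s, κ * d x ≤ f x) ⟨1, one_pos, by simp⟩
    (fun s t hst ⟨κ, hκ, ht⟩ => ⟨κ, hκ, fun x hx => ht x (hst hx)⟩)
    (fun s t ⟨κ, hκ, hs⟩ ⟨κ', hκ', ht⟩ => ⟨min κ κ', lt_min hκ hκ', ?_⟩) fun x hx => ?_
  · rintro x (hx | hx)
    · exact (mul_le_mul_of_nonneg_right (min_le_left _ _) (hd0 x)).trans (hs x hx)
    · exact (mul_le_mul_of_nonneg_right (min_le_right _ _) (hd0 x)).trans (ht x hx)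
  suffices ∃ κ > 0, ∀ᶠ y in 𝓝 x, κ * d y ≤ f y by
    obtain ⟨κ, hκ, hev⟩ := this
    exact ⟨_, mem_nhdsWithin_of_mem_nhds hev, κ, hκ, fun y hy => hy⟩
  rcases le_or_gt (f x) 0 with hfx | hfx
  · exact hloc x hx hfx
  refine ⟨f x / (2 * (d x + 1)), by have := hd0 x; positivity, ?_⟩
  filter_upwards [(hf.tendsto x).eventually_const_lt (half_lt_self hfx),
    (hd.tendsto x).eventually_lt_const (lt_add_one (d x))] with y hfy hdy
  calc f x / (2 * (d x + 1)) * d y ≤ f x / (2 * (d x + 1)) * (d x + 1) := by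
        gcongr
        · have := hd0 x; positivity
    _ = f x / 2 := by have := hd0 x; field_simp
    _ ≤ f y := hfy.le

section ErrorBound

variable {E W : Type*}

def constancySpace [AddCommGroup E] [Module ℝ E] (F : E → W) : Submodule ℝ E where
  carrier := {v | ∀ (t : ℝ) (x : E), F (x + t • v) = F x}
  add_mem' {v w} hv hw t x := by rw [smul_add, ← add_assoc, hw, hv]
  zero_mem' t x := by rw [smul_zero, add_zero]
  smul_mem' c v hv t x := by rw [smul_smul]; exact hv _ x

variable [NormedAddCommGroup E]

theorem infDist_add_of_mem_constancySpace [NormedSpace ℝ E] {F : E → W} {v : E}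
    (hv : v ∈ constancySpace F) (x : E) (c : W) : infDist (x + v) (F ⁻¹' {c}) = infDist x (F ⁻¹' {c}) := by
  have himage : (· + v) '' (F ⁻¹' {c}) = F ⁻¹' {c} := by
    ext y
    constructor
    · rintro ⟨z, hz, rfl⟩
      have := hv 1 z
      rw [one_smul] at this
      simpa [this] using hz
    · intro hy
      refine ⟨y - v, ?_, sub_add_cancel y v⟩
      have := hv (-1) y
      rw [neg_one_smul, ← sub_eq_add_neg] at this
      simpa [this] using hy
  simpa [himage] using infDist_image (isometry_add_right v) (x := x) (t := F ⁻¹' {c})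

variable [NormedAddCommGroup W]

theorem infDist_smul_preimage_zero [NormedSpace ℝ E] [NormedSpace ℝ W] {F : E → W}
    (hhom : ∀ t : ℝ, 0 ≤ t → ∀ x, F (t • x) = t • F x) {t : ℝ} (ht : 0 < t) (x : E) :
    infDist (t • x) (F ⁻¹' {0}) = t * infDist x (F ⁻¹' {0}) := by
  have hcone : t • F ⁻¹' {0} = F ⁻¹' {0} := by
    ext y
    rw [Set.mem_smul_set_iff_inv_smul_mem₀ ht.ne']
    simp only [Set.mem_preimage, Set.mem_singleton_iff, hhom _ (inv_nonneg.mpr ht.le),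
      smul_eq_zero, inv_eq_zero, ht.ne', false_or]
  conv_lhs => rw [← hcone]
  rw [infDist_smul₀ ht.ne', Real.norm_of_nonneg ht.le]

theorem exists_errorBound_of_posHomogeneous [InnerProductSpace ℝ E] [FiniteDimensional ℝ E]
    [NormedSpace ℝ W] {F : E → W} (hF : Continuous F)
    (hhom : ∀ t : ℝ, 0 ≤ t → ∀ x, F (t • x) = t • F x)
    (hloc : ∀ z, F z = 0 → z ∉ constancySpace F →
      ∃ κ > 0, ∀ᶠ y in 𝓝 z, κ * infDist y (F ⁻¹' {0}) ≤ ‖F y‖) :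
    ∃ κ > 0, ∀ x, κ * infDist x (F ⁻¹' {0}) ≤ ‖F x‖ := by
  set L := constancySpace F
  have hF0 : F 0 = 0 := by simpa using hhom 0 le_rfl 0
  -- a unit vector orthogonal to `L` is not in `L`, so `hloc` applies on this compact set
  obtain ⟨κ, hκ, hK⟩ := ((isCompact_sphere (0 : E) 1).inter_right L.isClosed_orthogonal)
    |>.exists_pos_mul_le_of_eventually (continuous_norm.comp hF) (continuous_infDist_pt _)
      (fun _ => infDist_nonneg) fun z ⟨hz1, hzL⟩ hFz => by
        refine hloc z (norm_le_zero_iff.mp hFz) fun hzL' => ?_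
        have hz0 : z ∈ L ⊓ Lᗮ := Submodule.mem_inf.mpr ⟨hzL', hzL⟩
        rw [L.inf_orthogonal_eq_bot, Submodule.mem_bot] at hz0
        simp [hz0] at hz1
  have hperp : ∀ w ∈ Lᗮ, κ * infDist w (F ⁻¹' {0}) ≤ ‖F w‖ := by
    intro w hw
    rcases eq_or_ne w 0 with rfl | hw0
    · simp [infDist_zero_of_mem (show (0 : E) ∈ F ⁻¹' {0} from hF0)]
    have hpos : 0 < ‖w‖ := norm_pos_iff.mpr hw0
    set u := ‖w‖⁻¹ • w
    have hwu : w = ‖w‖ • u := (smul_inv_smul₀ hpos.ne' w).symm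
    have hu : κ * infDist u (F ⁻¹' {0}) ≤ ‖F u‖ :=
      hK u ⟨by simp [u, norm_smul, hpos.ne'], Lᗮ.smul_mem _ hw⟩
    rw [hwu, infDist_smul_preimage_zero hhom hpos, hhom _ hpos.le, norm_smul,
      Real.norm_of_nonneg hpos.le, mul_left_comm]
    exact mul_le_mul_of_nonneg_left hu hpos.le
  refine ⟨κ, hκ, fun x => ?_⟩
  obtain ⟨v, hv, w, hw, rfl⟩ := L.exists_add_mem_mem_orthogonal x
  rw [add_comm, infDist_add_of_mem_constancySpace hv, ← one_smul ℝ v, hv 1 w]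
  exact hperp w hw

theorem eventually_errorBound_of_eventually_eq [NormedSpace ℝ E] {F G : E → W} {z : E} {c : W}
    {κ : ℝ} (hκ : 0 ≤ κ) (hFG : ∀ᶠ g in 𝓝 0, F (z + g) = c + G g) (hG0 : G 0 = 0)
    (hG : ∀ g, κ * infDist g (G ⁻¹' {0}) ≤ ‖G g‖) :
    ∀ᶠ y in 𝓝 z, κ * infDist y (F ⁻¹' {c}) ≤ ‖F y - c‖ := by
  obtain ⟨δ, hδ, hball⟩ := Metric.eventually_nhds_iff.mp hFG
  -- near `z`, zeros of `G` close to `g` give points of `F ⁻¹' {c}` equally close to `z + g`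
  have hdist : ∀ g, ‖g‖ < δ / 2 → infDist (z + g) (F ⁻¹' {c}) ≤ infDist g (G ⁻¹' {0}) := by
    intro g hg
    refine le_of_forall_pos_lt_add fun ε hε => ?_
    have h0 : (0 : E) ∈ G ⁻¹' {0} := hG0
    have hlt : infDist g (G ⁻¹' {0}) < min (infDist g (G ⁻¹' {0}) + ε) (δ / 2) :=
      lt_min (by linarith) ((infDist_le_dist_of_mem h0).trans_lt (by rwa [dist_zero_right]))
    obtain ⟨w, hw, hgw⟩ := (infDist_lt_iff ⟨0, h0⟩).mp hlt
    have hwδ : dist w 0 < δ := by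
      rw [dist_zero_right]
      calc ‖w‖ ≤ ‖g‖ + dist g w := by
            rw [dist_comm, dist_eq_norm]
            exact norm_le_norm_add_norm_sub' w g
        _ < δ := by linarith [min_le_right (infDist g (G ⁻¹' {0}) + ε) (δ / 2)]
    have hzw : z + w ∈ F ⁻¹' {c} := by
      simpa [hball hwδ] using hw
    calc infDist (z + g) (F ⁻¹' {c}) ≤ dist (z + g) (z + w) := infDist_le_dist_of_mem hzw
      _ = dist g w := dist_add_left z g w
      _ < infDist g (G ⁻¹' {0}) + ε := hgw.trans_le (min_le_left _ _)
  filter_upwards [ball_mem_nhds z (half_pos hδ)] with y hy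
  obtain ⟨g, rfl⟩ : ∃ g, y = z + g := ⟨y - z, by abel⟩
  rw [mem_ball, dist_self_add_left] at hy
  rw [hball (by rw [dist_zero_right]; linarith), add_sub_cancel_left]
  exact (mul_le_mul_of_nonneg_left (hdist g hy) hκ).trans (hG g)

theorem exists_errorBound_of_coercive [ProperSpace E] {F : E → W} (hF : Continuous F) {c : W}
    (hne : (F ⁻¹' {c}).Nonempty)
    (hloc : ∀ z, F z = c → ∃ κ > 0, ∀ᶠ y in 𝓝 z, κ * infDist y (F ⁻¹' {c}) ≤ ‖F y - c‖)
    {κ₀ C : ℝ} (hκ₀ : 0 < κ₀) (hcoer : ∀ x, κ₀ * ‖x‖ - C ≤ ‖F x - c‖) :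
    ∃ κ > 0, ∀ x, κ * infDist x (F ⁻¹' {c}) ≤ ‖F x - c‖ := by
  obtain ⟨y₀, hy₀⟩ := hne
  set R := max (2 * C / κ₀) ‖y₀‖
  obtain ⟨κ₁, hκ₁, hball⟩ := (isCompact_closedBall (0 : E) R).exists_pos_mul_le_of_eventually
    (continuous_norm.comp (hF.sub continuous_const)) (continuous_infDist_pt _)
    (fun _ => infDist_nonneg) fun z _ hz => hloc z (sub_eq_zero.mp (norm_le_zero_iff.mp hz))
  refine ⟨min κ₁ (κ₀ / 4), lt_min hκ₁ (by positivity), fun x => ?_⟩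
  rcases le_or_gt ‖x‖ R with hxR | hxR
  · exact (mul_le_mul_of_nonneg_right (min_le_left _ _) infDist_nonneg).trans
      (hball x (mem_closedBall_zero_iff.mpr hxR))
  -- far from the origin both sides are comparable to `‖x‖`
  have hC : C ≤ κ₀ * ‖x‖ / 2 := by
    have := (le_max_left _ _).trans_lt hxR
    rw [div_lt_iff₀ hκ₀] at this
    linarith
  have hd : infDist x (F ⁻¹' {c}) ≤ 2 * ‖x‖ := by
    calc infDist x (F ⁻¹' {c}) ≤ dist x y₀ := infDist_le_dist_of_mem hy₀
      _ ≤ ‖x‖ + ‖y₀‖ := by rw [dist_eq_norm]; exact norm_sub_le x y₀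
      _ ≤ 2 * ‖x‖ := by linarith [(le_max_right (2 * C / κ₀) ‖y₀‖).trans_lt hxR]
  calc min κ₁ (κ₀ / 4) * infDist x (F ⁻¹' {c}) ≤ κ₀ / 4 * (2 * ‖x‖) :=
        mul_le_mul (min_le_right _ _) hd infDist_nonneg (by positivity)
    _ ≤ ‖F x - c‖ := by linarith [hcoer x]

end ErrorBound

section AbsValMap

variable {m n : Type*} [DecidableEq n]

def absOn (S : Finset n) (x : n → ℝ) : n → ℝ := fun j => if j ∈ S then |x j| else x j

noncomputable def signOn (S : Finset n) (z : n → ℝ) : n → ℝ :=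
  fun j => if j ∈ S ∧ z j < 0 then -1 else 1

theorem absOn_smul (S : Finset n) {t : ℝ} (ht : 0 ≤ t) (x : n → ℝ) :
    absOn S (t • x) = t • absOn S x := by
  ext j
  by_cases hj : j ∈ S <;> simp [absOn, hj, abs_mul, abs_of_nonneg ht]

theorem absOn_add_of_forall_eq_zero {S : Finset n} {z : n → ℝ} (hz : ∀ j ∈ S, z j = 0)
    (x : n → ℝ) : absOn S (x + z) = absOn S x + z := by
  ext j
  by_cases hj : j ∈ S <;> simp [absOn, hj, hz]

theorem absOn_add_of_abs_le {S : Finset n} {z g : n → ℝ} (hg : ∀ j ∈ S, z j ≠ 0 → |g j| ≤ |z j|) :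
    absOn S (z + g) = absOn S z + signOn S z * absOn (S.filter (z · = 0)) g := by
  ext j
  simp only [absOn, signOn, Pi.add_apply, Pi.mul_apply, Finset.mem_filter]
  by_cases hj : j ∈ S
  · rcases lt_trichotomy (z j) 0 with hneg | hzero | hpos
    · have := hg j hj hneg.ne
      rw [abs_of_nonpos (by linarith [le_abs_self (g j), abs_of_neg hneg])]
      simp [hj, hneg, hneg.ne, abs_of_neg hneg]
      ring
    · simp [hj, hzero]
    · have := hg j hj hpos.ne'
      rw [abs_of_nonneg (by linarith [neg_abs_le (g j), abs_of_pos hpos])]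
      simp [hj, hpos.ne', hpos.not_gt, abs_of_pos hpos]
  · simp [hj]

theorem continuous_absOn (S : Finset n) : Continuous (absOn S) :=
  continuous_pi fun j => by
    by_cases hj : j ∈ S
    · simpa [absOn, hj] using (continuous_apply j).abs
    · simpa [absOn, hj] using continuous_apply j

theorem absOn_univ [Fintype n] (x : n → ℝ) : absOn Finset.univ x = fun j => |x j| := by
  ext j
  simp [absOn]

variable [Fintype n]

def absValMap (M B : Matrix m n ℝ) (S : Finset n) (x : EuclideanSpace ℝ n) : EuclideanSpace ℝ m :=
  WithLp.toLp 2 (M *ᵥ x.ofLp - B *ᵥ absOn S x.ofLp)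

theorem continuous_absValMap (M B : Matrix m n ℝ) (S : Finset n) : Continuous (absValMap M B S) :=
  (PiLp.continuous_toLp 2 _).comp <|
    (continuous_const.matrix_mulVec (PiLp.continuous_ofLp 2 _)).sub
      (continuous_const.matrix_mulVec ((continuous_absOn S).comp (PiLp.continuous_ofLp 2 _)))

theorem absValMap_smul (M B : Matrix m n ℝ) (S : Finset n) {t : ℝ} (ht : 0 ≤ t)
    (x : EuclideanSpace ℝ n) : absValMap M B S (t • x) = t • absValMap M B S x := by
  simp [absValMap, absOn_smul S ht, mulVec_smul, smul_sub]

theorem absValMap_zero (M B : Matrix m n ℝ) (S : Finset n) : absValMap M B S 0 = 0 := by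
  simpa using absValMap_smul M B S le_rfl 0

theorem mem_constancySpace_absValMap {M B : Matrix m n ℝ} {S : Finset n} {z : EuclideanSpace ℝ n}
    (hz : ∀ j ∈ S, z j = 0) (hFz : absValMap M B S z = 0) :
    z ∈ constancySpace (absValMap M B S) := by
  intro t x
  have htz : ∀ j ∈ S, (t • z.ofLp) j = 0 := fun j hj => by simp [hz j hj]
  have hlin : M *ᵥ z.ofLp - B *ᵥ z.ofLp = 0 := by
    have habs : absOn S z.ofLp = z.ofLp := by
      ext j
      by_cases hj : j ∈ S <;> simp [absOn, hj, hz]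
    simpa [absValMap, habs] using congrArg WithLp.ofLp hFz
  simp only [absValMap, WithLp.ofLp_add, WithLp.ofLp_smul, absOn_add_of_forall_eq_zero htz,
    mulVec_add, mulVec_smul]
  congr 1
  linear_combination (norm := module) t • hlin

theorem eventually_absValMap_add (M B : Matrix m n ℝ) (S : Finset n) (z : EuclideanSpace ℝ n) :
    ∀ᶠ g in 𝓝 0, absValMap M B S (z + g) =
      absValMap M B S z + absValMap M (B * diagonal (signOn S z)) (S.filter (z · = 0)) g := by
  have hsmall : ∀ j, ∀ᶠ g : EuclideanSpace ℝ n in 𝓝 0, z j ≠ 0 → |g j| ≤ |z j| := fun j => by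
    by_cases hj : z j = 0
    · exact .of_forall fun _ h => (h hj).elim
    · have hlim : Tendsto (fun g : EuclideanSpace ℝ n => |g j|) (𝓝 0) (𝓝 0) := by
        simpa using (PiLp.continuous_apply 2 (fun _ : n => ℝ) j).abs.tendsto 0
      filter_upwards [hlim.eventually_lt_const (abs_pos.mpr hj)] with g hg _
      exact hg.le
  filter_upwards [eventually_all.mpr hsmall] with g hg
  have hdiag : B *ᵥ (signOn S z * absOn (S.filter (z · = 0)) g.ofLp) =
      (B * diagonal (signOn S z)) *ᵥ absOn (S.filter (z · = 0)) g.ofLp := by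
    rw [← mulVec_mulVec]
    congr 1
    ext j
    simp [mulVec_diagonal]
  simp only [absValMap, WithLp.ofLp_add, absOn_add_of_abs_le fun j _ => hg j, mulVec_add, hdiag]
  rw [← WithLp.toLp_add]
  congr 1
  abel

variable [Fintype m]

theorem absValMap_errorBound (M B : Matrix m n ℝ) (S : Finset n) :
    ∃ κ > 0, ∀ x, κ * infDist x (absValMap M B S ⁻¹' {0}) ≤ ‖absValMap M B S x‖ := by
  induction S using Finset.strongInduction generalizing B with
  | H S ih =>
  refine exists_errorBound_of_posHomogeneous (continuous_absValMap M B S)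
    (fun t ht x => absValMap_smul M B S ht x) fun z hz hzL => ?_
  obtain ⟨j, hjS, hj⟩ : ∃ j ∈ S, z j ≠ 0 := by
    by_contra! h
    exact hzL (mem_constancySpace_absValMap h hz)
  obtain ⟨κ, hκ, hG⟩ :=
    ih (S.filter (z · = 0)) (Finset.filter_ssubset.mpr ⟨j, hjS, hj⟩) (B * diagonal (signOn S z))
  refine ⟨κ, hκ, ?_⟩
  simpa [hz] using eventually_errorBound_of_eventually_eq hκ.le (eventually_absValMap_add M B S z)
    (absValMap_zero _ _ _) hG

theorem absValMap_sub_errorBound {M B : Matrix m n ℝ} {S : Finset n} {c : EuclideanSpace ℝ m}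
    (hne : (absValMap M B S ⁻¹' {c}).Nonempty) (hzero : ∀ x, absValMap M B S x = 0 → x = 0) :
    ∃ κ > 0, ∀ x, κ * infDist x (absValMap M B S ⁻¹' {c}) ≤ ‖absValMap M B S x - c‖ := by
  obtain ⟨κ₀, hκ₀, h₀⟩ := absValMap_errorBound M B S
  have hZ : absValMap M B S ⁻¹' {0} = {0} :=
    Set.eq_singleton_iff_unique_mem.mpr ⟨absValMap_zero M B S, hzero⟩
  refine exists_errorBound_of_coercive (continuous_absValMap M B S) hne (fun z hz => ?_) hκ₀
    (C := ‖c‖) fun x => ?_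
  · obtain ⟨κ, hκ, hG⟩ := absValMap_errorBound M (B * diagonal (signOn S z)) (S.filter (z · = 0))
    exact ⟨κ, hκ, eventually_errorBound_of_eventually_eq hκ.le
      (by simpa [hz] using eventually_absValMap_add M B S z) (absValMap_zero _ _ _) hG⟩
  · have := h₀ x
    rw [hZ, infDist_singleton, dist_zero_right] at this
    linarith [norm_sub_norm_le (absValMap M B S x) c]

end AbsValMap

theorem vnorm_eq_norm {n : ℕ} (x : Fin n → ℝ) : vnorm x = ‖WithLp.toLp 2 x‖ := by
  simp [vnorm, EuclideanSpace.norm_eq]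

/-- Global error bound: if the solution set of `A x − B|x| = b` is nonempty and `0` is the
only solution of `A x − B|x| = 0`, then there is `κ > 0` with
`κ · dist(x, X*) ≤ ‖A x − B|x| − b‖₂` for all `x`. -/
theorem gave_global_error_bound {m n : ℕ} (A B : Matrix (Fin m) (Fin n) ℝ) (b : Fin m → ℝ)
    (hne : ∃ x : Fin n → ℝ, A.mulVec x - B.mulVec (fun j => |x j|) = b)
    (hzero : ∀ x : Fin n → ℝ, A.mulVec x - B.mulVec (fun j => |x j|) = 0 → x = 0) :
    ∃ κ > (0 : ℝ), ∀ x : Fin n → ℝ,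
      κ * sInf {r : ℝ | ∃ y : Fin n → ℝ,
          A.mulVec y - B.mulVec (fun j => |y j|) = b ∧ r = vnorm (x - y)} ≤
        vnorm (A.mulVec x - B.mulVec (fun j => |x j|) - b) := by
  have hF : ∀ y, absValMap A B Finset.univ (WithLp.toLp 2 y) =
      WithLp.toLp 2 (A *ᵥ y - B *ᵥ fun j => |y j|) := fun y => by
    rw [absValMap, absOn_univ]
  have hmem : ∀ y, WithLp.toLp 2 y ∈ absValMap A B Finset.univ ⁻¹' {WithLp.toLp 2 b} ↔
      A *ᵥ y - B *ᵥ (fun j => |y j|) = b := fun y => by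
    rw [Set.mem_preimage, Set.mem_singleton_iff, hF, (WithLp.toLp_injective 2).eq_iff]
  obtain ⟨x₀, hx₀⟩ := hne
  obtain ⟨κ, hκ, hbound⟩ := absValMap_sub_errorBound (M := A) (B := B) (S := Finset.univ)
    (c := WithLp.toLp 2 b) ⟨_, (hmem x₀).mpr hx₀⟩ fun x hx => by
      rw [← WithLp.toLp_ofLp 2 x, hF, WithLp.toLp_eq_zero] at hx
      rw [← WithLp.toLp_ofLp 2 x, hzero _ hx, WithLp.toLp_zero]
  refine ⟨κ, hκ, fun x => ?_⟩
  have hdist : sInf {r : ℝ | ∃ y : Fin n → ℝ, A *ᵥ y - B *ᵥ (fun j => |y j|) = b ∧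
      r = vnorm (x - y)} =
      infDist (WithLp.toLp 2 x) (absValMap A B Finset.univ ⁻¹' {WithLp.toLp 2 b}) := by
    rw [infDist_eq_iInf]
    congr 1
    ext r
    constructor
    · rintro ⟨y, hy, rfl⟩
      exact ⟨⟨_, (hmem y).mpr hy⟩, by simp only [vnorm_eq_norm, dist_eq_norm, WithLp.toLp_sub]⟩
    · rintro ⟨⟨y, hy⟩, rfl⟩
      rw [← WithLp.toLp_ofLp 2 y, hmem] at hy
      refine ⟨y.ofLp, hy, ?_⟩
      simp only [vnorm_eq_norm, dist_eq_norm, WithLp.toLp_sub, WithLp.toLp_ofLp]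
  rw [hdist, vnorm_eq_norm, WithLp.toLp_sub, ← hF]
  exact hbound (WithLp.toLp 2 x)
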